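/- The value V(π/√3) = 2π ∫₀^{π/√3} ∫_{−π/2}^{π/2} τ · sin(τ cos v) dv dτ satisfies 20.0023 < V(π/√3) < 20.0024. (This is the volume Vol(B(R₄)) ≈ 20.00238509 of the ball of radius R₄ = π/√3 ≈ 1.81379936 of the optimal multiply transitive packing in equation (2.12) of the paper.) -/

import Mathlib

open Real

/-- The volume of the geodesic ball of radius `ρ` in `S² × ℝ` geometry
(Theorem 2.4 of the paper). -/
noncomputable def ballVol (ρ : ℝ) : ℝ :=
  2 * π * ∫ τ in (0 : ℝ)..ρ, ∫ v in (-(π / 2))..(π / 2), τ * Real.sin (τ * Real.cos v)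

/-!
On `x ≥ 0` the Taylor polynomials of `sin` alternately bound it from below and above
(`sin x - sinTaylor n x` has derivative `cos x - cosTaylor n x`, and vice versa up to sign, so the
bounds propagate by monotonicity). Since the weight `τ` and the argument `τ cos v` are nonnegative
on the domain of integration, integrating these bounds sandwiches `ballVol ρ` between partial sums
of `4π ∑ (-1)^k ρ^(2k+3) / ((2k+1)‼² (2k+3))`; the double factorials come from the Wallis
integrals of `cos^(2k+1)` over `[-π/2, π/2]`. As `ballVol` is increasing on `[0, π]`, it is
enough to evaluate the partial sums with 6 and 7 terms at rational radii just below and just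
above `π/√3`.
-/

open Finset intervalIntegral
open scoped Nat

noncomputable def sinTaylor (n : ℕ) (x : ℝ) : ℝ :=
  ∑ k ∈ range n, (-1) ^ k * (x ^ (2 * k + 1) / (2 * k + 1)!)

noncomputable def cosTaylor (n : ℕ) (x : ℝ) : ℝ :=
  ∑ k ∈ range n, (-1) ^ k * (x ^ (2 * k) / (2 * k)!)

lemma hasDerivAt_pow_succ_div_factorial (m : ℕ) (x : ℝ) :
    HasDerivAt (fun y : ℝ => y ^ (m + 1) / (m + 1)!) (x ^ m / m !) x := by
  refine ((hasDerivAt_pow (m + 1) x).div_const _).congr_deriv ?_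
  rw [Nat.factorial_succ]
  push_cast
  field_simp

lemma hasDerivAt_sinTaylor (n : ℕ) (x : ℝ) : HasDerivAt (sinTaylor n) (cosTaylor n x) x :=
  HasDerivAt.fun_sum fun k _ => (hasDerivAt_pow_succ_div_factorial (2 * k) x).const_mul _

lemma continuous_sinTaylor (n : ℕ) : Continuous (sinTaylor n) :=
  continuous_iff_continuousAt.2 fun x => (hasDerivAt_sinTaylor n x).continuousAt

lemma hasDerivAt_cosTaylor_succ (n : ℕ) (x : ℝ) :
    HasDerivAt (cosTaylor (n + 1)) (-sinTaylor n x) x := by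
  have h : cosTaylor (n + 1) =
      fun y : ℝ =>
        ∑ k ∈ range n, (-1) ^ (k + 1) * (y ^ (2 * k + 1 + 1) / (2 * k + 1 + 1)!) + 1 := by
    ext y
    simp [cosTaylor, sum_range_succ', mul_add]
  rw [h, sinTaylor, ← sum_neg_distrib]
  refine (HasDerivAt.fun_sum fun k _ => ?_).add_const 1
  refine ((hasDerivAt_pow_succ_div_factorial (2 * k + 1) x).const_mul _).congr_deriv ?_
  ring

@[simp] lemma sinTaylor_zero_right (n : ℕ) : sinTaylor n 0 = 0 := by
  simp [sinTaylor]

@[simp] lemma cosTaylor_succ_zero_right (n : ℕ) : cosTaylor (n + 1) 0 = 1 := by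
  simp [cosTaylor, sum_range_succ']

lemma nonneg_of_hasDerivAt_nonneg {f f' : ℝ → ℝ} (hf : ∀ x, HasDerivAt f (f' x) x)
    (hf₀ : f 0 = 0) (hf' : ∀ x, 0 < x → 0 ≤ f' x) {x : ℝ} (hx : 0 ≤ x) : 0 ≤ f x := by
  have hmono : MonotoneOn f (Set.Ici 0) :=
    monotoneOn_of_hasDerivWithinAt_nonneg (convex_Ici 0)
      (fun y _ => (hf y).continuousAt.continuousWithinAt)
      (fun y _ => (hf y).hasDerivWithinAt)
      (fun y hy => hf' y (by simpa using hy))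
  simpa [hf₀] using hmono Set.self_mem_Ici hx hx

lemma sin_sub_sinTaylor_alternating {n : ℕ}
    (hcos : ∀ x, 0 ≤ x → 0 ≤ (-1) ^ n * (cos x - cosTaylor n x)) (x : ℝ) (hx : 0 ≤ x) :
    0 ≤ (-1) ^ n * (sin x - sinTaylor n x) :=
  nonneg_of_hasDerivAt_nonneg
    (fun y => ((hasDerivAt_sin y).sub (hasDerivAt_sinTaylor n y)).const_mul _)
    (by simp) (fun y hy => hcos y hy.le) hx

lemma cos_sub_cosTaylor_succ_alternating {n : ℕ}
    (hsin : ∀ x, 0 ≤ x → 0 ≤ (-1) ^ n * (sin x - sinTaylor n x)) (x : ℝ) (hx : 0 ≤ x) :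
    0 ≤ (-1) ^ (n + 1) * (cos x - cosTaylor (n + 1) x) := by
  refine nonneg_of_hasDerivAt_nonneg
    (fun y => ((hasDerivAt_cos y).sub (hasDerivAt_cosTaylor_succ n y)).const_mul _)
    (by simp) (fun y hy => ?_) hx
  convert hsin y hy.le using 1
  ring

lemma cos_sub_cosTaylor_alternating (n : ℕ) (x : ℝ) (hx : 0 ≤ x) :
    0 ≤ (-1) ^ (n + 1) * (cos x - cosTaylor (n + 1) x) := by
  induction n generalizing x with
  | zero => simpa [cosTaylor] using cos_le_one x
  | succ n ih => exact cos_sub_cosTaylor_succ_alternating (sin_sub_sinTaylor_alternating ih) x hx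

lemma sinTaylor_two_mul_add_two_le_sin (m : ℕ) {x : ℝ} (hx : 0 ≤ x) :
    sinTaylor (2 * m + 2) x ≤ sin x := by
  have := sin_sub_sinTaylor_alternating (cos_sub_cosTaylor_alternating (2 * m + 1)) x hx
  rwa [Even.neg_one_pow ⟨m + 1, by ring⟩, one_mul, sub_nonneg] at this

lemma sin_le_sinTaylor_two_mul_add_one (m : ℕ) {x : ℝ} (hx : 0 ≤ x) :
    sin x ≤ sinTaylor (2 * m + 1) x := by
  have := sin_sub_sinTaylor_alternating (cos_sub_cosTaylor_alternating (2 * m)) x hx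
  rwa [Odd.neg_one_pow ⟨m, rfl⟩, neg_one_mul, neg_nonneg, sub_nonpos] at this

lemma integral_cos_pow_two_mul_add_one (k : ℕ) :
    ∫ v in -(π / 2)..π / 2, cos v ^ (2 * k + 1) = 2 * (2 * k)‼ / (2 * k + 1)‼ := by
  induction k with
  | zero => norm_num [integral_cos]
  | succ k ih =>
    rw [show 2 * (k + 1) + 1 = 2 * k + 1 + 2 by ring, integral_cos_pow, ih,
      show 2 * (k + 1) = 2 * k + 2 by ring, Nat.doubleFactorial_add_two,
      Nat.doubleFactorial_add_two]
    norm_num [cos_pi_div_two]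
    field_simp
    ring

lemma integral_mul_sinTaylor_comp_cos (n : ℕ) (τ : ℝ) :
    ∫ v in -(π / 2)..π / 2, τ * sinTaylor n (τ * cos v) =
      2 * ∑ k ∈ range n, (-1) ^ k * τ ^ (2 * k + 2) / ((2 * k + 1)‼ : ℝ) ^ 2 := by
  have hterm (k : ℕ) (v : ℝ) : τ * ((-1) ^ k * ((τ * cos v) ^ (2 * k + 1) / (2 * k + 1)!)) =
      (-1) ^ k * τ ^ (2 * k + 2) / (2 * k + 1)! * cos v ^ (2 * k + 1) := by ring
  simp only [sinTaylor, mul_sum, hterm]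
  rw [integral_finsetSum fun k _ => by apply Continuous.intervalIntegrable; fun_prop]
  refine sum_congr rfl fun k _ => ?_
  rw [integral_const_mul, integral_cos_pow_two_mul_add_one, Nat.factorial_eq_mul_doubleFactorial]
  have := (2 * k).doubleFactorial_pos
  push_cast
  field_simp

noncomputable def ballIntegral (f : ℝ → ℝ) (ρ : ℝ) : ℝ :=
  2 * π * ∫ τ in (0 : ℝ)..ρ, ∫ v in -(π / 2)..π / 2, τ * f (τ * cos v)

lemma ballVol_eq_ballIntegral_sin : ballVol = ballIntegral sin := rfl

lemma ballIntegral_sinTaylor (n : ℕ) (ρ : ℝ) :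
    ballIntegral (sinTaylor n) ρ =
      4 * π * ∑ k ∈ range n,
        (-1) ^ k * ρ ^ (2 * k + 3) / (((2 * k + 1)‼ : ℝ) ^ 2 * (2 * k + 3)) := by
  simp only [ballIntegral, integral_mul_sinTaylor_comp_cos, mul_div_assoc]
  rw [integral_const_mul, integral_finsetSum fun k _ => by
    apply Continuous.intervalIntegrable; fun_prop, mul_sum, mul_sum, mul_sum]
  refine sum_congr rfl fun k _ => ?_
  rw [integral_const_mul, integral_div, integral_pow]
  push_cast
  field_simp
  ring

lemma continuous_integral_mul_comp_cos {f : ℝ → ℝ} (hf : Continuous f) :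
    Continuous fun τ => ∫ v in -(π / 2)..π / 2, τ * f (τ * cos v) :=
  continuous_parametric_intervalIntegral_of_continuous' (by fun_prop) _ _

lemma mul_cos_mem_Icc {τ v : ℝ} (hτ : 0 ≤ τ) (hv : v ∈ Set.Icc (-(π / 2)) (π / 2)) :
    τ * cos v ∈ Set.Icc 0 τ :=
  ⟨mul_nonneg hτ (cos_nonneg_of_mem_Icc hv), mul_le_of_le_one_right hτ (cos_le_one v)⟩

lemma integral_mul_comp_cos_mono {f g : ℝ → ℝ} (hf : Continuous f) (hg : Continuous g)
    {τ : ℝ} (hτ : 0 ≤ τ) (hfg : ∀ x ∈ Set.Icc 0 τ, f x ≤ g x) :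
    ∫ v in -(π / 2)..π / 2, τ * f (τ * cos v) ≤
      ∫ v in -(π / 2)..π / 2, τ * g (τ * cos v) :=
  integral_mono_on (by linarith [pi_pos]) (by apply Continuous.intervalIntegrable; fun_prop)
    (by apply Continuous.intervalIntegrable; fun_prop)
    fun v hv => mul_le_mul_of_nonneg_left (hfg _ (mul_cos_mem_Icc hτ hv)) hτ

lemma ballIntegral_mono {f g : ℝ → ℝ} (hf : Continuous f) (hg : Continuous g) {ρ : ℝ}
    (hρ : 0 ≤ ρ) (hfg : ∀ x ∈ Set.Icc 0 ρ, f x ≤ g x) :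
    ballIntegral f ρ ≤ ballIntegral g ρ := by
  refine mul_le_mul_of_nonneg_left ?_ (by positivity)
  exact integral_mono_on hρ ((continuous_integral_mul_comp_cos hf).intervalIntegrable _ _)
    ((continuous_integral_mul_comp_cos hg).intervalIntegrable _ _)
    fun τ hτ => integral_mul_comp_cos_mono hf hg hτ.1
      fun x hx => hfg x ⟨hx.1, hx.2.trans hτ.2⟩

lemma ballIntegral_mono_radius {f : ℝ → ℝ} (hf : Continuous f) {a b : ℝ}
    (ha : 0 ≤ a) (hab : a ≤ b) (hf₀ : ∀ x ∈ Set.Icc 0 b, 0 ≤ f x) :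
    ballIntegral f a ≤ ballIntegral f b := by
  have hint := continuous_integral_mul_comp_cos hf
  refine mul_le_mul_of_nonneg_left ?_ (by positivity)
  rw [← integral_add_adjacent_intervals (hint.intervalIntegrable 0 a)
    (hint.intervalIntegrable a b), le_add_iff_nonneg_right]
  refine integral_nonneg hab fun τ hτ => ?_
  simpa using integral_mul_comp_cos_mono continuous_const hf (ha.trans hτ.1)
    fun x hx => hf₀ x ⟨hx.1, hx.2.trans hτ.2⟩

lemma pi_div_sqrt_three_mem_Ioo : π / √3 ∈ Set.Ioo 1.813799 1.8137994 := by
  have hsqrt : (0 : ℝ) < √3 := by positivity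
  have hsqrt_lt : √3 < 3.14159265358979323846 / 1.813799 :=
    (sqrt_lt' (by norm_num)).2 (by norm_num)
  have hlt_sqrt : 3.14159265358979323847 / 1.8137994 < √3 :=
    (lt_sqrt (by norm_num)).2 (by norm_num)
  rw [lt_div_iff₀ (by norm_num)] at hsqrt_lt
  rw [div_lt_iff₀ (by norm_num)] at hlt_sqrt
  constructor
  · rw [lt_div_iff₀ hsqrt]; linarith [pi_gt_d20]
  · rw [div_lt_iff₀ hsqrt]; linarith [pi_lt_d20]

/-- The volume of the ball of radius `R₄ = π/√3 ≈ 1.81379936` of the optimal multiply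
transitive packing (equation (2.12) of the paper): `Vol(B(R₄)) ≈ 20.00238509`. -/
theorem ballVol_pi_div_sqrt_three_bounds :
    20.0023 < ballVol (π / Real.sqrt 3) ∧ ballVol (π / Real.sqrt 3) < 20.0024 := by
  obtain ⟨hlo, hhi⟩ := pi_div_sqrt_three_mem_Ioo
  have hsin : ∀ x ∈ Set.Icc 0 1.8137994, 0 ≤ sin x := fun x hx =>
    sin_nonneg_of_nonneg_of_le_pi hx.1 (hx.2.trans (by linarith [pi_gt_three]))
  rw [ballVol_eq_ballIntegral_sin]
  constructor
  · calc (20.0023 : ℝ) < ballIntegral (sinTaylor 6) 1.813799 := by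
          rw [ballIntegral_sinTaylor]
          norm_num [sum_range_succ, Nat.doubleFactorial]
          linarith [pi_gt_d20]
      _ ≤ ballIntegral sin 1.813799 :=
          ballIntegral_mono (continuous_sinTaylor 6) continuous_sin (by norm_num)
            fun x hx => sinTaylor_two_mul_add_two_le_sin 2 hx.1
      _ ≤ ballIntegral sin (π / √3) := ballIntegral_mono_radius continuous_sin
          (by norm_num) hlo.le fun x hx => hsin x ⟨hx.1, hx.2.trans hhi.le⟩
  · calc ballIntegral sin (π / √3) ≤ ballIntegral sin 1.8137994 :=
          ballIntegral_mono_radius continuous_sin (by linarith) hhi.le hsin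
      _ ≤ ballIntegral (sinTaylor 7) 1.8137994 :=
          ballIntegral_mono continuous_sin (continuous_sinTaylor 7) (by norm_num)
            fun x hx => sin_le_sinTaylor_two_mul_add_one 3 hx.1
      _ < 20.0024 := by
          rw [ballIntegral_sinTaylor]
          norm_num [sum_range_succ, Nat.doubleFactorial]
          linarith [pi_lt_d20]
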